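/- Let d ≥ 1, a > 0, and ρ(z) = exp(−a|z|²); this ρ satisfies conditions (I) and (II). Then the monomials are orthogonal for the associated pairing: ⟨z^n, z^m⟩ = 0 for n ≠ m, and ⟨z^n, z^n⟩ = s(n)·π·n!/a^{n+1}, where s: ℕ → {±1} is the sign sequence determined by s(n) = (−1)^n for 0 ≤ n ≤ d−1 and s(n+d) = −s(n) for all n ≥ 0. -/

import Mathlib

open MeasureTheory Polynomial Complex

/-- The weight-`ℓ` component (mod `d`) of a polynomial: the sum of its monomials
whose degree is congruent to `ℓ` mod `d`. -/
noncomputable def weightComp (d ℓ : ℕ) (f : Polynomial ℂ) : Polynomial ℂ :=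
  ∑ k ∈ f.support.filter (fun k => k % d = ℓ), Polynomial.monomial k (f.coeff k)

/-- A polynomial has weight `ℓ` (mod `d`) if all its monomials have degree `≡ ℓ [MOD d]`. -/
def HasWeight (d ℓ : ℕ) (f : Polynomial ℂ) : Prop :=
  ∀ k ∈ f.support, k % d = ℓ

/-- `σg(z) = Σ_{ℓ=0}^{d-1} (-ε)^{-ℓ} g_ℓ(ε z)`. -/
noncomputable def sigmaMap (d : ℕ) (ε : ℂ) (g : Polynomial ℂ) (z : ℂ) : ℂ :=
  ∑ ℓ ∈ Finset.range d, (-ε) ^ (-(ℓ : ℤ)) * (weightComp d ℓ g).eval (ε * z)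

/-- The pairing `⟨f,g⟩ = ∫_ℂ f(z) conj(σg(z)) ρ(z) dx dy`. -/
noncomputable def genPairing (d : ℕ) (ε : ℂ) (ρ : ℂ → ℂ) (f g : Polynomial ℂ) : ℂ :=
  ∫ z : ℂ, f.eval z * (starRingEnd ℂ) (sigmaMap d ε g z) * ρ z

/-- Condition (I): `ρ` is measurable and `∫_ℂ |z|^n |ρ(z)| dx dy < ∞` for all `n`. -/
def CondI (ρ : ℂ → ℂ) : Prop :=
  Measurable ρ ∧
  ∀ n : ℕ, MeasureTheory.Integrable (fun z : ℂ => ‖z‖ ^ n * ‖ρ z‖)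

/-- Condition (II): `ρ(ε z) = conj(ρ(z))` for every `ε` with `ε^d = -1`. -/
def CondII (d : ℕ) (ρ : ℂ → ℂ) : Prop :=
  ∀ ε : ℂ, ε ^ d = -1 → ∀ z : ℂ, ρ (ε * z) = (starRingEnd ℂ) (ρ z)

/-! On a monomial `σ` acts by a sign: writing `m = d q + r` with `r < d`, the relation
`ε ^ d = -1` gives `σ(z ^ m) = (-ε) ^ (-r) (ε z) ^ m = (-1) ^ (r + q) z ^ m`, and
`(-1) ^ (r + q)` is `s m`. Hence `⟨z ^ n, z ^ m⟩ = s m ∫ z ^ n z̄ ^ m e ^ (-a |z|²)`.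
In polar coordinates this Gaussian moment is the product of the radial Gamma integral
`∫ r ^ (2n+1) e ^ (-a r²) dr = n! / (2 a ^ (n+1))` and the angular integral of
`e ^ (i (n - m) θ)`, which vanishes unless `n = m`. -/

lemma eq_neg_one_pow_of_antiperiodic {d : ℕ} (hd : 0 < d) {s : ℕ → ℝ}
    (hs₁ : ∀ n < d, s n = (-1) ^ n) (hs₂ : ∀ n, s (n + d) = -s n) (n : ℕ) :
    s n = (-1) ^ (n % d + n / d) := by
  induction n using Nat.strong_induction_on with
  | _ n ih =>
    rcases lt_or_ge n d with h | h
    · rw [hs₁ n h, Nat.mod_eq_of_lt h, Nat.div_eq_of_lt h, add_zero]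
    · obtain ⟨k, rfl⟩ := Nat.exists_eq_add_of_le' h
      rw [hs₂ k, ih k (by omega), Nat.add_mod_right, Nat.add_div_right k hd, ← add_assoc,
        pow_succ]
      ring

section SigmaOnMonomials

variable {d : ℕ} {ε : ℂ}

lemma pos_of_pow_eq_neg_one (hε : ε ^ d = -1) : 0 < d := by
  refine Nat.pos_of_ne_zero ?_
  rintro rfl
  norm_num at hε

lemma norm_eq_one_of_pow_eq_neg_one (hε : ε ^ d = -1) : ‖ε‖ = 1 :=
  Complex.norm_eq_one_of_pow_eq_one (n := 2 * d) (by rw [pow_mul', hε]; norm_num)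
    (by have := pos_of_pow_eq_neg_one hε; omega)

lemma weightComp_X_pow (ℓ m : ℕ) :
    weightComp d ℓ (X ^ m) = if m % d = ℓ then X ^ m else 0 := by
  unfold weightComp
  rw [support_X_pow, Finset.filter_singleton]
  split_ifs <;> simp [monomial_one_right_eq_X_pow]

lemma sigmaMap_X_pow (hd : 0 < d) (m : ℕ) (z : ℂ) :
    sigmaMap d ε (X ^ m) z = ((-ε) ^ (m % d))⁻¹ * (ε * z) ^ m := by
  simp only [sigmaMap, weightComp_X_pow, zpow_neg, zpow_natCast]
  rw [Finset.sum_eq_single_of_mem (m % d) (Finset.mem_range.2 (Nat.mod_lt m hd))]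
  · simp
  · intro ℓ _ hℓ
    simp [Ne.symm hℓ]

lemma inv_neg_pow_mod_mul_pow (hε : ε ^ d = -1) (m : ℕ) :
    ((-ε) ^ (m % d))⁻¹ * ε ^ m = (-1) ^ (m % d + m / d) := by
  have hε0 : ε ≠ 0 := by rintro rfl; simp [zero_pow (pos_of_pow_eq_neg_one hε).ne'] at hε
  have hεm : ε ^ m = (-1) ^ (m / d) * ε ^ (m % d) := by
    rw [← hε, ← pow_mul, ← pow_add, Nat.div_add_mod]
  rw [hεm, neg_pow, mul_inv, pow_add, ← inv_pow, inv_neg_one]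
  field_simp

lemma sigmaMap_X_pow_of_pow_eq_neg_one (hε : ε ^ d = -1) (m : ℕ) (z : ℂ) :
    sigmaMap d ε (X ^ m) z = (-1) ^ (m % d + m / d) * z ^ m := by
  rw [sigmaMap_X_pow (pos_of_pow_eq_neg_one hε), mul_pow, ← mul_assoc,
    inv_neg_pow_mod_mul_pow hε]

lemma genPairing_X_pow (hε : ε ^ d = -1) (ρ : ℂ → ℂ) (n m : ℕ) :
    genPairing d ε ρ (X ^ n) (X ^ m) =
      (-1) ^ (m % d + m / d) * ∫ z, z ^ n * (starRingEnd ℂ) z ^ m * ρ z := by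
  rw [genPairing, ← integral_const_mul]
  congr 1
  funext z
  simp only [eval_pow, eval_X, sigmaMap_X_pow_of_pow_eq_neg_one hε, map_mul, map_pow, map_neg,
    map_one]
  ring

end SigmaOnMonomials

section GaussianMoments

lemma integrable_norm_pow_mul_exp_neg_mul_sq_norm {E : Type*} [NormedAddCommGroup E]
    [NormedSpace ℝ E] [Nontrivial E] [FiniteDimensional ℝ E] [MeasurableSpace E] [BorelSpace E]
    (μ : Measure E) [μ.IsAddHaarMeasure] {a : ℝ} (ha : 0 < a) (n : ℕ) :
    Integrable (fun x : E => ‖x‖ ^ n * Real.exp (-a * ‖x‖ ^ 2)) μ := by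
  rw [integrable_fun_norm_addHaar μ (f := fun r => r ^ n * Real.exp (-a * r ^ 2))]
  have hs : (-1 : ℝ) < (Module.finrank ℝ E - 1 + n : ℕ) :=
    neg_one_lt_zero.trans_le (by positivity)
  refine (integrableOn_rpow_mul_exp_neg_mul_sq ha hs).congr_fun (fun r _ => ?_) measurableSet_Ioi
  simp only [Real.rpow_natCast, smul_eq_mul, pow_add]
  ring

lemma integral_exp_int_mul_mul_I {k : ℤ} (hk : k ≠ 0) :
    ∫ θ in Set.Ioo (-Real.pi) Real.pi, cexp (k * θ * I) = 0 := by
  rw [← integral_Ioc_eq_integral_Ioo,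
    ← intervalIntegral.integral_of_le (by linarith [Real.pi_pos])]
  have hc : (k : ℂ) * I ≠ 0 := by simp [hk]
  simp_rw [mul_right_comm _ _ I]
  rw [integral_exp_mul_complex hc, div_eq_zero_iff, sub_eq_zero]
  left
  have hperiod : (k * I * Real.pi : ℂ) = k * I * (-Real.pi : ℝ) + k * (2 * Real.pi * I) := by
    push_cast; ring
  rw [hperiod, Complex.exp_add, Complex.exp_int_mul_two_pi_mul_I, mul_one]

lemma integral_pow_mul_exp_neg_mul_sq_Ioi {a : ℝ} (ha : 0 < a) (n : ℕ) :
    ∫ r in Set.Ioi (0 : ℝ), r ^ (2 * n + 1) * Real.exp (-a * r ^ 2) =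
      n.factorial / (2 * a ^ (n + 1)) := by
  have hpow : ∀ r : ℝ, r ^ (2 * n + 1) * Real.exp (-a * r ^ 2) =
      r ^ ((2 * n + 1 : ℕ) : ℝ) * Real.exp (-a * r ^ (2 : ℝ)) := fun r => by
    rw [Real.rpow_natCast, Real.rpow_two]
  simp_rw [hpow]
  rw [integral_rpow_mul_exp_neg_mul_rpow two_pos (neg_one_lt_zero.trans_le (by positivity)) ha]
  have h₁ : -(((2 * n + 1 : ℕ) : ℝ) + 1) / 2 = -((n + 1 : ℕ) : ℝ) := by push_cast; ring
  have h₂ : (((2 * n + 1 : ℕ) : ℝ) + 1) / 2 = n + 1 := by push_cast; ring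
  rw [h₁, h₂, Real.Gamma_nat_eq_factorial, Real.rpow_neg ha.le, Real.rpow_natCast]
  field_simp

lemma polarCoord_symm_smul_moment (a : ℝ) (n m : ℕ) (p : ℝ × ℝ) (hp : 0 < p.1) :
    p.1 • (Complex.polarCoord.symm p ^ n * (starRingEnd ℂ) (Complex.polarCoord.symm p) ^ m *
        (Real.exp (-a * ‖Complex.polarCoord.symm p‖ ^ 2) : ℂ)) =
      ((p.1 ^ (n + m + 1) * Real.exp (-a * p.1 ^ 2) : ℝ) : ℂ) *
        cexp (((n - m : ℤ) : ℂ) * p.2 * I) := by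
  set z := Complex.polarCoord.symm p with hz_def
  have hnorm : ‖z‖ = p.1 := by rw [Complex.norm_polarCoord_symm, abs_of_pos hp]
  have hz : z = p.1 * cexp (p.2 * I) := by
    rw [hz_def, Complex.polarCoord_symm_apply, Complex.exp_mul_I, Complex.ofReal_cos,
      Complex.ofReal_sin]
  have hzbar : (starRingEnd ℂ) z = p.1 * cexp (-(p.2 * I)) := by
    rw [hz, map_mul, ← Complex.exp_conj]
    simp
  have hexp :
      cexp (p.2 * I) ^ n * cexp (-(p.2 * I)) ^ m = cexp (((n - m : ℤ) : ℂ) * p.2 * I) := by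
    rw [← Complex.exp_nat_mul, ← Complex.exp_nat_mul, ← Complex.exp_add]
    push_cast
    ring_nf
  rw [hnorm, hzbar, hz, Complex.real_smul, mul_pow, mul_pow, ← hexp]
  push_cast
  ring

lemma integral_pow_mul_conj_pow_mul_gaussian {a : ℝ} (ha : 0 < a) (n m : ℕ) :
    ∫ z : ℂ, z ^ n * (starRingEnd ℂ) z ^ m * (Real.exp (-a * ‖z‖ ^ 2) : ℂ) =
      if n = m then ((Real.pi * n.factorial / a ^ (n + 1) : ℝ) : ℂ) else 0 := by
  rw [← Complex.integral_comp_polarCoord_symm, polarCoord_target,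
    setIntegral_congr_fun (measurableSet_Ioi.prod measurableSet_Ioo)
      (fun p hp => polarCoord_symm_smul_moment a n m p hp.1),
    Measure.volume_eq_prod,
    setIntegral_prod_mul (fun r : ℝ => ((r ^ (n + m + 1) * Real.exp (-a * r ^ 2) : ℝ) : ℂ))
      (fun θ : ℝ => cexp (((n - m : ℤ) : ℂ) * θ * I))]
  split_ifs with h
  · subst h
    have hangle : ∫ θ in Set.Ioo (-Real.pi) Real.pi, cexp (((n - n : ℤ) : ℂ) * θ * I) =
        (2 * Real.pi : ℝ) := by
      simp [Real.pi_pos.le, two_mul]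
    rw [hangle, integral_complex_ofReal, ← two_mul,
      integral_pow_mul_exp_neg_mul_sq_Ioi ha n, ← Complex.ofReal_mul]
    congr 1
    field_simp
  · rw [integral_exp_int_mul_mul_I (by omega), mul_zero]

end GaussianMoments

theorem stmt_12_general (d : ℕ) (a : ℝ) (ha : 0 < a)
    (ρ : ℂ → ℂ)
    (hρ : ρ = fun z : ℂ => Complex.exp (-(a : ℂ) * ((‖z‖ : ℝ) : ℂ) ^ 2))
    (ε : ℂ) (hε : ε ^ d = -1)
    (s : ℕ → ℝ) (hs₁ : ∀ n < d, s n = (-1 : ℝ) ^ n) (hs₂ : ∀ n : ℕ, s (n + d) = -s n) :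
    (CondI ρ ∧ CondII d ρ) ∧
    (∀ n m : ℕ, n ≠ m → genPairing d ε ρ (X ^ n) (X ^ m) = 0) ∧
    (∀ n : ℕ, genPairing d ε ρ (X ^ n) (X ^ n) =
      (s n : ℂ) * (Real.pi : ℂ) * (n.factorial : ℂ) / (a : ℂ) ^ (n + 1)) := by
  obtain rfl : ρ = fun z => (Real.exp (-a * ‖z‖ ^ 2) : ℂ) := by
    rw [hρ]
    push_cast
    rfl
  refine ⟨⟨⟨by fun_prop, fun n => ?_⟩, fun ε' hε' z => ?_⟩, fun n m hnm => ?_, fun n => ?_⟩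
  · simpa only [Complex.norm_real, Real.norm_eq_abs, Real.abs_exp] using
      integrable_norm_pow_mul_exp_neg_mul_sq_norm (volume : Measure ℂ) ha n
  · simp only [norm_mul, norm_eq_one_of_pow_eq_neg_one hε', one_mul, Complex.conj_ofReal]
  · rw [genPairing_X_pow hε, integral_pow_mul_conj_pow_mul_gaussian ha, if_neg hnm, mul_zero]
  · rw [genPairing_X_pow hε, integral_pow_mul_conj_pow_mul_gaussian ha, if_pos rfl,
      eq_neg_one_pow_of_antiperiodic (pos_of_pow_eq_neg_one hε) hs₁ hs₂]
    push_cast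
    ring

theorem stmt_12 (d : ℕ) (hd : 1 ≤ d) (a : ℝ) (ha : 0 < a)
    (ρ : ℂ → ℂ)
    (hρ : ρ = fun z : ℂ => Complex.exp (-(a : ℂ) * ((‖z‖ : ℝ) : ℂ) ^ 2))
    (ε : ℂ) (hε : ε ^ d = -1)
    (s : ℕ → ℝ) (hs₁ : ∀ n < d, s n = (-1 : ℝ) ^ n) (hs₂ : ∀ n : ℕ, s (n + d) = -s n) :
    (CondI ρ ∧ CondII d ρ) ∧
    (∀ n m : ℕ, n ≠ m → genPairing d ε ρ (X ^ n) (X ^ m) = 0) ∧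
    (∀ n : ℕ, genPairing d ε ρ (X ^ n) (X ^ n) =
      (s n : ℂ) * (Real.pi : ℂ) * (n.factorial : ℂ) / (a : ℂ) ^ (n + 1)) :=
  stmt_12_general d a ha ρ hρ ε hε s hs₁ hs₂
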